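/- arXiv:1409.4739 — 2 statements merged into one kernel-verified Lean document; each statement's English description precedes it below -/
import Mathlib

section
/- Fix β > 2, K > 0, λ > 0, s ∈ ℝ. With ν_n(s,r) = G_Z((s - β log(Kr) - n/β)/√n) (G_Z the standard normal CDF), the integral 2πλ ∫_0^∞ r ν_n(s,r) dr converges, as n → ∞, to (λπ/K²) exp(2s/β). -/
/-!
Write `Φ (a - b log r)` as the Gaussian integral over `x < a - b log r`, i.e. over
`r < exp ((a - x) / b)`. Fubini turns `∫₀^∞ r Φ(a - b log r) dr` into
`½ ∫ φ(x) exp (2 (a - x) / b) dx = ½ exp (2a/b + 2/b²)`, a Gaussian moment generating function.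
For `a = (s - β log K - n/β)/√n` and `b = β/√n` the drift `-n/β` exactly cancels the variance
term `2/b² = 2n/β²`, so the integral equals `e^{2s/β} / (2K²)` for every `n > 0`.
-/

open MeasureTheory Real Filter

/-- Standard normal CDF. -/
noncomputable def stdGaussCDF (t : ℝ) : ℝ :=
  (Real.sqrt (2 * Real.pi))⁻¹ * ∫ x in Set.Iio t, Real.exp (-x ^ 2 / 2)

open Set

lemma exp_neg_sq_div_two_mul_exp (c x : ℝ) :
    exp (-x ^ 2 / 2) * exp (c * x) = exp (c ^ 2 / 2) * exp (-(1 / 2) * (x - c) ^ 2) := by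
  rw [← exp_add, ← exp_add]
  ring_nf

lemma integrable_exp_neg_sq_div_two_mul_exp (c : ℝ) :
    Integrable fun x => exp (-x ^ 2 / 2) * exp (c * x) := by
  simp_rw [exp_neg_sq_div_two_mul_exp c]
  exact ((integrable_exp_neg_mul_sq (by norm_num : (0 : ℝ) < 1 / 2)).comp_sub_right c).const_mul _

lemma integral_exp_neg_sq_div_two_mul_exp (c : ℝ) :
    ∫ x, exp (-x ^ 2 / 2) * exp (c * x) = sqrt (2 * π) * exp (c ^ 2 / 2) := by
  simp_rw [exp_neg_sq_div_two_mul_exp c]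
  rw [integral_const_mul, integral_sub_right_eq_self (fun x => exp (-(1 / 2) * x ^ 2)) c,
    integral_gaussian, div_div_eq_mul_div, div_one, mul_comm π, mul_comm]

section LogScale

variable {a b : ℝ}

lemma lt_sub_mul_log_iff_lt_exp (hb : 0 < b) {x r : ℝ} (hr : 0 < r) :
    x < a - b * log r ↔ r < exp ((a - x) / b) := by
  rw [← log_lt_iff_lt_exp hr, lt_div_iff₀ hb]
  constructor <;> intro h <;> linarith

lemma ite_lt_sub_mul_log_eq_indicator (hb : 0 < b) (x : ℝ) (f : ℝ → ℝ) {r : ℝ} (hr : 0 < r) :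
    (if x < a - b * log r then f r else 0) = (Ioo 0 (exp ((a - x) / b))).indicator f r := by
  simp only [indicator_apply, mem_Ioo, hr, true_and, lt_sub_mul_log_iff_lt_exp hb hr]

lemma setIntegral_Ioo_zero_mul_const (R c : ℝ) (hR : 0 ≤ R) :
    ∫ r in Ioo 0 R, r * c = c * R ^ 2 / 2 := by
  rw [← integral_Ioc_eq_integral_Ioo, ← intervalIntegral.integral_of_le hR,
    intervalIntegral.integral_mul_const, integral_id]
  ring

lemma setIntegral_Ioi_ite_lt_sub_mul_log (hb : 0 < b) (x c : ℝ) :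
    ∫ r in Ioi 0, (if x < a - b * log r then r * c else 0) = c * exp (2 * (a - x) / b) / 2 := by
  rw [setIntegral_congr_fun measurableSet_Ioi
      fun r hr => ite_lt_sub_mul_log_eq_indicator hb x (· * c) hr,
    integral_indicator measurableSet_Ioo, Measure.restrict_restrict measurableSet_Ioo,
    inter_eq_left.mpr Ioo_subset_Ioi_self, setIntegral_Ioo_zero_mul_const _ _ (exp_pos _).le,
    ← exp_nat_mul]
  ring_nf

lemma integrableOn_Ioi_ite_lt_sub_mul_log (hb : 0 < b) (x c : ℝ) :
    IntegrableOn (fun r => if x < a - b * log r then r * c else 0) (Ioi 0) := by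
  refine IntegrableOn.congr_fun ?_
    (fun r hr => (ite_lt_sub_mul_log_eq_indicator hb x (· * c) hr).symm) measurableSet_Ioi
  refine ((integrable_indicator_iff measurableSet_Ioo).mpr ?_).integrableOn
  exact (continuous_id.mul continuous_const).integrableOn_Icc.mono_set Ioo_subset_Icc_self

lemma setIntegral_Ioi_mul_setIntegral_Iio_sub_mul_log {g : ℝ → ℝ} (hb : 0 < b)
    (hg_meas : Measurable g) (hg_nonneg : ∀ x, 0 ≤ g x)
    (hg_int : Integrable fun x => g x * exp (2 * (a - x) / b)) :
    ∫ r in Ioi 0, r * ∫ x in Iio (a - b * log r), g x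
      = (∫ x, g x * exp (2 * (a - x) / b)) / 2 := by
  set F : ℝ → ℝ → ℝ := fun r x => if x < a - b * log r then r * g x else 0
  have hF_meas : Measurable (Function.uncurry F) :=
    Measurable.ite (measurableSet_lt measurable_snd
        (measurable_const.sub ((measurable_log.comp measurable_fst).const_mul b)))
      (measurable_fst.mul (hg_meas.comp measurable_snd)) measurable_const
  have hF_norm : ∀ x, ∫ r in Ioi 0, ‖F r x‖ = ∫ r in Ioi 0, F r x := fun x =>
    setIntegral_congr_fun measurableSet_Ioi fun r (hr : 0 < r) => by
      refine Real.norm_of_nonneg ?_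
      by_cases h : x < a - b * log r
      · simpa [F, h] using mul_nonneg hr.le (hg_nonneg x)
      · simp [F, h]
  have hF_int : Integrable (Function.uncurry F) ((volume.restrict (Ioi 0)).prod volume) := by
    rw [integrable_prod_iff' hF_meas.aestronglyMeasurable]
    refine ⟨ae_of_all _ fun x => integrableOn_Ioi_ite_lt_sub_mul_log hb x (g x), ?_⟩
    simp_rw [Function.uncurry_apply_pair, hF_norm, F, setIntegral_Ioi_ite_lt_sub_mul_log hb]
    exact hg_int.div_const 2
  calc ∫ r in Ioi 0, r * ∫ x in Iio (a - b * log r), g x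
      = ∫ r in Ioi 0, ∫ x, F r x := by
        congr 1; funext r
        rw [← integral_const_mul, ← integral_indicator measurableSet_Iio]
        rfl
    _ = ∫ x, ∫ r in Ioi 0, F r x := integral_integral_swap hF_int
    _ = ∫ x, g x * exp (2 * (a - x) / b) / 2 := by
        simp_rw [F, setIntegral_Ioi_ite_lt_sub_mul_log hb]
    _ = _ := integral_div _ _

lemma setIntegral_Ioi_mul_stdGaussCDF_sub_mul_log (hb : 0 < b) :
    ∫ r in Ioi 0, r * stdGaussCDF (a - b * log r) = exp (2 * a / b + 2 / b ^ 2) / 2 := by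
  have hsplit : ∀ x, exp (-x ^ 2 / 2) * exp (2 * (a - x) / b)
      = exp (2 * a / b) * (exp (-x ^ 2 / 2) * exp (-(2 / b) * x)) := fun x => by
    simp only [← exp_add]
    ring_nf
  have hint : Integrable fun x => exp (-x ^ 2 / 2) * exp (2 * (a - x) / b) := by
    simp_rw [hsplit]
    exact (integrable_exp_neg_sq_div_two_mul_exp _).const_mul _
  have hsqrt : sqrt (2 * π) ≠ 0 := (sqrt_pos.mpr (by positivity)).ne'
  simp_rw [stdGaussCDF, mul_left_comm _ (sqrt (2 * π))⁻¹]
  rw [integral_const_mul, setIntegral_Ioi_mul_setIntegral_Iio_sub_mul_log hb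
    (by fun_prop) (fun x => (exp_pos _).le) hint]
  simp_rw [hsplit]
  rw [integral_const_mul, integral_exp_neg_sq_div_two_mul_exp, exp_add]
  field_simp

end LogScale

lemma setIntegral_Ioi_mul_stdGaussCDF_log_mul {β K s n : ℝ} (hβ : 0 < β) (hK : 0 < K)
    (hn : 0 < n) :
    ∫ r in Ioi 0, r * stdGaussCDF ((s - β * log (K * r) - n / β) / sqrt n)
      = exp (2 * s / β) / (2 * K ^ 2) := by
  have hsqrt : 0 < sqrt n := sqrt_pos.mpr hn
  have harg : ∀ r ∈ Ioi (0 : ℝ), (s - β * log (K * r) - n / β) / sqrt n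
      = (s - β * log K - n / β) / sqrt n - β / sqrt n * log r := fun r (hr : 0 < r) => by
    rw [log_mul hK.ne' hr.ne']
    ring
  rw [setIntegral_congr_fun measurableSet_Ioi fun r hr => by rw [harg r hr],
    setIntegral_Ioi_mul_stdGaussCDF_sub_mul_log (div_pos hβ hsqrt)]
  have hexponent : 2 * ((s - β * log K - n / β) / sqrt n) / (β / sqrt n) + 2 / (β / sqrt n) ^ 2
      = 2 * s / β - log (K ^ 2) := by
    rw [div_pow, sq_sqrt hn.le, log_pow]
    push_cast
    field_simp
    ring
  rw [hexponent, exp_sub, exp_log (by positivity)]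
  ring

theorem nu_n_integral_tendsto_general (β K lam s : ℝ) (hβ : 2 < β) (hK : 0 < K) :
    Tendsto (fun n : ℝ =>
        2 * π * lam * ∫ r in Set.Ioi (0 : ℝ),
          r * stdGaussCDF ((s - β * Real.log (K * r) - n / β) / Real.sqrt n))
      atTop (nhds (lam * π / K ^ 2 * Real.exp (2 * s / β))) := by
  refine tendsto_const_nhds.congr' ?_
  filter_upwards [eventually_gt_atTop 0] with n hn
  rw [setIntegral_Ioi_mul_stdGaussCDF_log_mul (by linarith) hK hn]
  field_simp

/-- `2πλ ∫_0^∞ r ν_n(s,r) dr → (λπ/K²) e^(2s/β)` as `n → ∞`. -/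
theorem nu_n_integral_tendsto (β K lam s : ℝ) (hβ : 2 < β) (hK : 0 < K)
    (hlam : 0 < lam) :
    Tendsto (fun n : ℝ =>
        2 * π * lam * ∫ r in Set.Ioi (0 : ℝ),
          r * stdGaussCDF ((s - β * Real.log (K * r) - n / β) / Real.sqrt n))
      atTop (nhds (lam * π / K ^ 2 * Real.exp (2 * s / β))) :=
  nu_n_integral_tendsto_general β K lam s hβ hK
end

section
/- Fix β > 2, K > 0, s ∈ ℝ. Suppose b_n > 0 satisfies log(b_n)/n → ∞, and set v_n = (s - β log(K b_n) - n/β)/√n. Then exp((2/β)(s - n/β - v_n √n)) · G_Z(v_n) → 0 as n → ∞, where G_Z is the standard normal CDF. -/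
/-!
The `v_n √n` in the exponent cancels, so the term is `exp (2 L_n) * Φ(v_n)` with
`L_n = log (K b_n)`. Since `L_n / n → ∞`, eventually `L_n ≥ max(s, 8n)`, hence
`v_n ≤ -L_n / √n ≤ 0`, and the Chernoff bound `Φ(v) ≤ exp (-v² / 2)` gives
`exp (2 L_n - L_n² / (2n)) ≤ exp (-2 L_n) → 0`.
-/

open Real Filter

open MeasureTheory ProbabilityTheory

lemma stdGaussCDF_eq_measureReal_Iio (t : ℝ) :
    stdGaussCDF t = (gaussianReal 0 1).real (Set.Iio t) := by
  rw [measureReal_def, gaussianReal_apply_eq_integral _ one_ne_zero,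
    ENNReal.toReal_ofReal
      (setIntegral_nonneg measurableSet_Iio fun x _ => gaussianPDFReal_nonneg _ _ _),
    stdGaussCDF, ← integral_const_mul]
  simp [gaussianPDFReal]

lemma stdGaussCDF_nonneg (t : ℝ) : 0 ≤ stdGaussCDF t :=
  stdGaussCDF_eq_measureReal_Iio t ▸ measureReal_nonneg

lemma stdGaussCDF_le_exp_neg_sq_div_two {t : ℝ} (ht : t ≤ 0) :
    stdGaussCDF t ≤ exp (-t ^ 2 / 2) :=
  calc stdGaussCDF t ≤ (gaussianReal 0 1).real {x | id x ≤ t} :=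
        stdGaussCDF_eq_measureReal_Iio t ▸ measureReal_mono Set.Iio_subset_Iic_self
    _ ≤ exp (-t * t) * mgf id (gaussianReal 0 1) t :=
        measure_le_le_exp_mul_mgf t ht (integrable_exp_mul_gaussianReal t)
    _ = exp (-t ^ 2 / 2) := by
        rw [mgf_id_gaussianReal, ← exp_add]; congr 1; push_cast; ring

lemma tendsto_log_const_mul_div_atTop {K : ℝ} {b : ℕ → ℝ} (hK : K ≠ 0) (hb : ∀ n, b n ≠ 0)
    (hblog : Tendsto (fun n : ℕ => log (b n) / n) atTop atTop) :
    Tendsto (fun n : ℕ => log (K * b n) / n) atTop atTop := by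
  simp only [log_mul hK (hb _), add_div]
  exact (tendsto_const_div_atTop_nhds_zero_nat (log K)).add_atTop hblog

lemma exp_mul_stdGaussCDF_le_exp_neg_two_mul {β s x L : ℝ} (hβ : 2 ≤ β) (hx : 0 < x) (hsL : s ≤ L)
    (hxL : 8 * x ≤ L) :
    exp ((2 / β) * (s - x / β - ((s - β * L - x / β) / √x) * √x)) *
        stdGaussCDF ((s - β * L - x / β) / √x) ≤ exp (-(2 * L)) := by
  set v := (s - β * L - x / β) / √x
  have hL : 0 ≤ L := by linarith
  have hexp : (2 / β) * (s - x / β - v * √x) = 2 * L := by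
    rw [div_mul_cancel₀ _ (sqrt_ne_zero'.2 hx)]
    field_simp
    ring
  have hv : v ≤ -(L / √x) := by
    rw [neg_div', div_le_div_iff_of_pos_right (sqrt_pos.2 hx)]
    have : 0 ≤ x / β := by positivity
    nlinarith
  have hv_sq : 8 * L ≤ v ^ 2 :=
    calc 8 * L ≤ L ^ 2 / x := by rw [le_div_iff₀ hx]; nlinarith
      _ = (L / √x) ^ 2 := by rw [div_pow, sq_sqrt hx.le]
      _ ≤ (-v) ^ 2 := pow_le_pow_left₀ (by positivity) (le_neg_of_le_neg hv) 2
      _ = v ^ 2 := neg_sq v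
  calc exp ((2 / β) * (s - x / β - v * √x)) * stdGaussCDF v
      ≤ exp (2 * L) * exp (-v ^ 2 / 2) := by
        rw [hexp]
        gcongr
        exact stdGaussCDF_le_exp_neg_sq_div_two (hv.trans (neg_nonpos.2 (by positivity)))
    _ ≤ exp (-(2 * L)) := by
        rw [← exp_add]
        gcongr
        linarith

/-- Outer-boundary integrated term vanishes: if `log(b_n)/n → ∞` and
`v_n = (s - β log(K b_n) - n/β)/√n`, then
`exp((2/β)(s - n/β - v_n √n)) G_Z(v_n) → 0`. -/
theorem outer_boundary_term_vanishes (β K s : ℝ) (hβ : 2 < β) (hK : 0 < K)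
    (b : ℕ → ℝ) (hb : ∀ n, 0 < b n)
    (hblog : Tendsto (fun n : ℕ => Real.log (b n) / (n : ℝ)) atTop atTop) :
    Tendsto (fun n : ℕ =>
        Real.exp ((2 / β) * (s - (n : ℝ) / β -
            ((s - β * Real.log (K * b n) - (n : ℝ) / β) / Real.sqrt n) *
              Real.sqrt n)) *
          stdGaussCDF ((s - β * Real.log (K * b n) - (n : ℝ) / β) / Real.sqrt n))
      atTop (nhds 0) := by
  have hL_div := tendsto_log_const_mul_div_atTop hK.ne' (fun n => (hb n).ne') hblog
  have hL : Tendsto (fun n : ℕ => log (K * b n)) atTop atTop := by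
    refine tendsto_atTop_mono' _ ?_ tendsto_natCast_atTop_atTop
    filter_upwards [hL_div.eventually_ge_atTop 1, eventually_gt_atTop 0] with n h hn
    exact (one_le_div₀ (Nat.cast_pos.2 hn)).1 h
  refine squeeze_zero' (.of_forall fun n => mul_nonneg (exp_pos _).le (stdGaussCDF_nonneg _))
    ?_ (tendsto_exp_neg_atTop_nhds_zero.comp (hL.const_mul_atTop two_pos))
  filter_upwards [hL.eventually_ge_atTop s, hL_div.eventually_ge_atTop 8, eventually_gt_atTop 0]
    with n hsL hL8 hn
  have hn' : (0 : ℝ) < n := Nat.cast_pos.2 hn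
  exact exp_mul_stdGaussCDF_le_exp_neg_two_mul hβ.le hn' hsL ((le_div_iff₀ hn').1 hL8)
end
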